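/- The Poisson kernel of the unit strip 𝕊 = {z : 0 ≤ Re z ≤ 1}, given by P_b(x+iy, s) = sin(πx) / (2(cosh(π(y−s)) − cos(π(x−b)))) for b ∈ {0,1}, satisfies ∫_{-∞}^{∞} P_0(x+iy, s) ds = 1 − x and ∫_{-∞}^{∞} P_1(x+iy, s) ds = x, for 0 < x < 1 and y ∈ ℝ. -/

import Mathlib

/-!
On the line, `t ↦ 2 arctan ((eᵗ - cos a) / sin a)` is an antiderivative of
`sin a / (cosh t - cos a)` (substitute `u = eᵗ` and complete the square in
`u² - 2u cos a + 1`); it increases from `2a - π` to `π`, so the integral is `2(π - a)`.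
Translating and rescaling by `π` gives `∫ sin a / (2(cosh (π(y - s)) - cos a)) ds = 1 - a/π`,
which is the claim for `P_0` with `a = πx`; for `P_1` take `a = π(1 - x)`, since
`sin (π(1 - x)) = sin (πx)` and `cos (π(1 - x)) = cos (π(x - 1))`.
-/

open Real Filter MeasureTheory Topology Set

theorem integrableOn_Iio_deriv_of_nonneg {f f' : ℝ → ℝ} {m : ℝ}
    (hderiv : ∀ x, HasDerivAt f (f' x) x) (hf' : ∀ x, 0 ≤ f' x)
    (hbot : Tendsto f atBot (𝓝 m)) : IntegrableOn f' (Iio 0) := by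
  have hreflect : IntegrableOn (f' ∘ Neg.neg) (Ioi 0) := by
    refine integrableOn_Ioi_deriv_of_nonneg' (g := fun x => -f (-x)) (fun x _ => ?_)
      (fun x _ => hf' _) (hbot.comp tendsto_neg_atTop_atBot).neg
    simpa [Function.comp_def] using ((hderiv (-x)).comp x (hasDerivAt_neg x)).fun_neg
  rw [← (Measure.measurePreserving_neg volume).integrableOn_comp_preimage
    (Homeomorph.neg ℝ).measurableEmbedding]
  simpa using hreflect

theorem integral_of_hasDerivAt_of_nonneg {f f' : ℝ → ℝ} {m n : ℝ}
    (hderiv : ∀ x, HasDerivAt f (f' x) x) (hf' : ∀ x, 0 ≤ f' x)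
    (hbot : Tendsto f atBot (𝓝 m)) (htop : Tendsto f atTop (𝓝 n)) :
    ∫ x, f' x = n - m := by
  refine integral_of_hasDerivAt_of_tendsto hderiv ?_ hbot htop
  have hIci : IntegrableOn f' (Ici 0) := (integrableOn_Ici_iff_integrableOn_Ioi).mpr
    (integrableOn_Ioi_deriv_of_nonneg' (fun x _ => hderiv x) (fun x _ => hf' x) htop)
  rw [← integrableOn_univ, ← Iio_union_Ici]
  exact (integrableOn_Iio_deriv_of_nonneg hderiv hf' hbot).union hIci

theorem arctan_cos_div_sin {a : ℝ} (h0 : 0 < a) (h1 : a < π) :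
    arctan (cos a / sin a) = π / 2 - a := by
  rw [← sin_pi_div_two_sub, ← cos_pi_div_two_sub a, ← tan_eq_sin_div_cos,
    arctan_tan (by linarith) (by linarith)]

theorem hasDerivAt_arctan_exp_sub_cos_div_sin {a : ℝ} (ha : sin a ≠ 0) (t : ℝ) :
    HasDerivAt (fun t => 2 * arctan ((exp t - cos a) / sin a))
      (sin a / (cosh t - cos a)) t := by
  have hinner : HasDerivAt (fun t => (exp t - cos a) / sin a) (exp t / sin a) t :=
    ((hasDerivAt_exp t).sub_const _).div_const _
  refine (hinner.arctan.const_mul 2).congr_deriv ?_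
  have hcos : cos a < 1 := by
    nlinarith [sin_sq_add_cos_sq a, cos_le_one a, sq_pos_of_ne_zero ha]
  have hdenom : 0 < cosh t - cos a := by linarith [one_le_cosh t]
  have hsquare : sin a ^ 2 + (exp t - cos a) ^ 2 = 2 * exp t * (cosh t - cos a) := by
    rw [cosh_eq, exp_neg]
    field_simp
    linear_combination sin_sq_add_cos_sq a
  rw [div_pow, one_add_div (pow_ne_zero 2 ha), hsquare]
  field_simp

theorem integral_sin_div_cosh_sub_cos {a : ℝ} (h0 : 0 < a) (h1 : a < π) :
    ∫ t, sin a / (cosh t - cos a) = 2 * (π - a) := by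
  have hsin : 0 < sin a := sin_pos_of_pos_of_lt_pi h0 h1
  have hcos : cos a < 1 := by
    simpa using cos_lt_cos_of_nonneg_of_le_pi le_rfl h1.le h0
  have htop : Tendsto (fun t => 2 * arctan ((exp t - cos a) / sin a)) atTop
      (𝓝 (2 * (π / 2))) :=
    ((tendsto_arctan_atTop.mono_right nhdsWithin_le_nhds).comp
      ((tendsto_exp_atTop.atTop_add (tendsto_const_nhds (x := -cos a))).atTop_div_const
        hsin)).const_mul 2
  have hbot : Tendsto (fun t => 2 * arctan ((exp t - cos a) / sin a)) atBot
      (𝓝 (2 * arctan ((0 - cos a) / sin a))) :=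
    ((continuous_arctan.tendsto _).comp
      ((tendsto_exp_atBot.sub_const (cos a)).div_const (sin a))).const_mul 2
  rw [integral_of_hasDerivAt_of_nonneg (hasDerivAt_arctan_exp_sub_cos_div_sin hsin.ne')
    (fun t => div_nonneg hsin.le (by linarith [one_le_cosh t])) hbot htop,
    zero_sub, neg_div, arctan_neg, arctan_cos_div_sin h0 h1]
  ring

theorem integral_sin_div_two_mul_cosh_pi_mul_sub_cos {a : ℝ} (y : ℝ) (h0 : 0 < a) (h1 : a < π) :
    ∫ s, sin a / (2 * (cosh (π * (y - s)) - cos a)) = 1 - a / π := by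
  rw [integral_sub_left_eq_self (fun t => sin a / (2 * (cosh (π * t) - cos a))),
    Measure.integral_comp_mul_left (fun u => sin a / (2 * (cosh u - cos a)))]
  simp_rw [mul_comm (2 : ℝ), ← div_div]
  rw [integral_div, integral_sin_div_cosh_sub_cos h0 h1, abs_of_pos (inv_pos.2 pi_pos),
    smul_eq_mul]
  field_simp

/-- the Poisson kernels
`P_b(x+iy, s) = sin(πx) / (2(cosh(π(y−s)) − cos(π(x−b))))`, `b ∈ {0,1}`, of the unit strip
satisfy `∫ P_0(x+iy, s) ds = 1 − x` and `∫ P_1(x+iy, s) ds = x` for `0 < x < 1`, `y ∈ ℝ`. -/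
theorem stmt16 (x y : ℝ) (hx0 : 0 < x) (hx1 : x < 1) :
    (∫ s : ℝ, Real.sin (π * x) /
        (2 * (Real.cosh (π * (y - s)) - Real.cos (π * (x - 0))))) = 1 - x ∧
    (∫ s : ℝ, Real.sin (π * x) /
        (2 * (Real.cosh (π * (y - s)) - Real.cos (π * (x - 1))))) = x := by
  have hπ := pi_pos
  have hreflect : ∀ s, sin (π * x) / (2 * (cosh (π * (y - s)) - cos (π * (x - 1)))) =
      sin (π * (1 - x)) / (2 * (cosh (π * (y - s)) - cos (π * (1 - x)))) := fun s => by
    rw [show π * (1 - x) = π - π * x by ring, sin_pi_sub, ← cos_neg (π - π * x)]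
    ring_nf
  constructor
  · rw [sub_zero, integral_sin_div_two_mul_cosh_pi_mul_sub_cos y (by positivity) (by nlinarith)]
    field_simp
  · rw [integral_congr_ae (ae_of_all _ hreflect),
      integral_sin_div_two_mul_cosh_pi_mul_sub_cos y (by nlinarith) (by nlinarith)]
    field_simp
    ring
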